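/- Let w and a be real numbers such that either a > 0 and w > 0, or a < 0 and w < 0; note tanh(w·a) > 0 in both cases. If a > 0 and w > 0, then: for every x ∈ [-1, -tanh(w·a)] and every v ≥ a/tanh(w·a), tanh(w·x·v) ≤ -tanh(w·a); for every x ∈ [-1, -tanh(w·a)] and every v ≤ -a/tanh(w·a), tanh(w·x·v) ≥ tanh(w·a); for every x ∈ [tanh(w·a), 1] and every v ≥ a/tanh(w·a), tanh(w·x·v) ≥ tanh(w·a); for every x ∈ [tanh(w·a), 1] and every v ≤ -a/tanh(w·a), tanh(w·x·v) ≤ -tanh(w·a). If a < 0 and w < 0, then the same four conclusions hold with the conditions on v replaced respectively by v ≤ a/tanh(w·a), v ≥ -a/tanh(w·a), v ≤ a/tanh(w·a), v ≥ -a/tanh(w·a). In both cases -tanh(w·a) < tanh(w·a), so the state intervals X_0 = [-1, -tanh(w·a)] and X_1 = [tanh(w·a), 1] are disjoint, and the two input intervals are disjoint. -/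

import Mathlib

/-!
With `t = tanh (w * a) > 0`, a state `x ∈ [t, 1]` and an input `v ≥ a / t` (for `a, w > 0`)
give `x * v ≥ t * (a / t) = a`, hence `w * x * v ≥ w * a` and `tanh (w * x * v) ≥ t` by
monotonicity of `tanh`. The other cases follow from three symmetries: `tanh` is odd, so
`x ↦ -x` exchanges the two state intervals and `v ↦ -v` exchanges the two input classes,
while `(w, a, v) ↦ (-w, -a, -v)` leaves both `w * a` and `w * x * v` unchanged.
-/

open Real Set

namespace Real

theorem tanh_strictMono : StrictMono tanh := fun x y hxy => lt_of_not_ge fun h => hxy.not_ge <| by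
  simpa only [artanh_tanh] using artanh_le_artanh (neg_one_lt_tanh y) (tanh_lt_one x) h

theorem tanh_pos {x : ℝ} (hx : 0 < x) : 0 < tanh x := by
  simpa only [tanh_zero] using tanh_strictMono hx

end Real

theorem le_mul_of_le_of_div_le {a t x v : ℝ} (ht : 0 < t) (ha : 0 ≤ a) (hx : t ≤ x)
    (hv : a / t ≤ v) : a ≤ x * v :=
  calc a = t * (a / t) := (mul_div_cancel₀ a ht.ne').symm
    _ ≤ x * v := mul_le_mul hx hv (div_nonneg ha ht.le) (ht.le.trans hx)

theorem tanh_le_tanh_mul_mul {w a x v : ℝ} (hw : 0 < w) (ha : 0 < a) (hx : tanh (w * a) ≤ x)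
    (hv : a / tanh (w * a) ≤ v) :
    tanh (w * a) ≤ tanh (w * x * v) := by
  refine tanh_strictMono.monotone ?_
  rw [mul_assoc]
  exact mul_le_mul_of_nonneg_left (le_mul_of_le_of_div_le (tanh_pos (mul_pos hw ha)) ha.le hx hv)
    hw.le

theorem tanh_neuron_cyclic_of_pos {w a : ℝ} (hw : 0 < w) (ha : 0 < a) :
    (∀ x ∈ Icc (-1 : ℝ) (-tanh (w * a)), ∀ v : ℝ, a / tanh (w * a) ≤ v →
        tanh (w * x * v) ≤ -tanh (w * a)) ∧
      (∀ x ∈ Icc (-1 : ℝ) (-tanh (w * a)), ∀ v : ℝ, v ≤ -a / tanh (w * a) →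
        tanh (w * a) ≤ tanh (w * x * v)) ∧
      (∀ x ∈ Icc (tanh (w * a)) 1, ∀ v : ℝ, a / tanh (w * a) ≤ v →
        tanh (w * a) ≤ tanh (w * x * v)) ∧
      (∀ x ∈ Icc (tanh (w * a)) 1, ∀ v : ℝ, v ≤ -a / tanh (w * a) →
        tanh (w * x * v) ≤ -tanh (w * a)) ∧
      Disjoint (Ici (a / tanh (w * a))) (Iic (-a / tanh (w * a))) := by
  have core {x v : ℝ} := @tanh_le_tanh_mul_mul w a x v hw ha
  have neg_state {x : ℝ} (hx : x ∈ Icc (-1) (-tanh (w * a))) : tanh (w * a) ≤ -x :=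
    le_neg_of_le_neg hx.2
  have neg_input {v : ℝ} (hv : v ≤ -a / tanh (w * a)) : a / tanh (w * a) ≤ -v :=
    le_neg_of_le_neg (hv.trans_eq (neg_div _ _))
  refine ⟨fun x hx v hv => ?_, fun x hx v hv => ?_, fun x hx v hv => core hx.1 hv,
    fun x hx v hv => ?_, ?_⟩
  · simpa only [mul_neg, neg_mul, tanh_neg, le_neg] using core (neg_state hx) hv
  · simpa only [mul_neg, neg_mul, neg_neg] using core (neg_state hx) (neg_input hv)
  · simpa only [mul_neg, tanh_neg, le_neg] using core hx.1 (neg_input hv)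
  · rw [Ici_disjoint_Iic, not_le, neg_div]
    exact neg_lt_self (div_pos ha (tanh_pos (mul_pos hw ha)))

theorem tanh_neuron_cyclic_of_neg {w a : ℝ} (hw : w < 0) (ha : a < 0) :
    (∀ x ∈ Icc (-1 : ℝ) (-tanh (w * a)), ∀ v : ℝ, v ≤ a / tanh (w * a) →
        tanh (w * x * v) ≤ -tanh (w * a)) ∧
      (∀ x ∈ Icc (-1 : ℝ) (-tanh (w * a)), ∀ v : ℝ, -a / tanh (w * a) ≤ v →
        tanh (w * a) ≤ tanh (w * x * v)) ∧
      (∀ x ∈ Icc (tanh (w * a)) 1, ∀ v : ℝ, v ≤ a / tanh (w * a) →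
        tanh (w * a) ≤ tanh (w * x * v)) ∧
      (∀ x ∈ Icc (tanh (w * a)) 1, ∀ v : ℝ, -a / tanh (w * a) ≤ v →
        tanh (w * x * v) ≤ -tanh (w * a)) ∧
      Disjoint (Iic (a / tanh (w * a))) (Ici (-a / tanh (w * a))) := by
  obtain ⟨h₁, h₂, h₃, h₄, h₅⟩ := tanh_neuron_cyclic_of_pos (neg_pos.2 hw) (neg_pos.2 ha)
  simp only [neg_mul_neg, neg_neg] at h₁ h₂ h₃ h₄ h₅
  have sign_flip {x v : ℝ} : w * x * v = -w * x * -v := by ring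
  have neg_le_input {v : ℝ} (hv : v ≤ a / tanh (w * a)) : -a / tanh (w * a) ≤ -v :=
    (neg_div _ _).trans_le (neg_le_neg hv)
  have le_neg_input {v : ℝ} (hv : -a / tanh (w * a) ≤ v) : -v ≤ a / tanh (w * a) :=
    neg_le.1 ((neg_div _ _).symm.trans_le hv)
  refine ⟨fun x hx v hv => ?_, fun x hx v hv => ?_, fun x hx v hv => ?_, fun x hx v hv => ?_,
    h₅.symm⟩
  · exact sign_flip ▸ h₁ x hx (-v) (neg_le_input hv)
  · exact sign_flip ▸ h₂ x hx (-v) (le_neg_input hv)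
  · exact sign_flip ▸ h₃ x hx (-v) (neg_le_input hv)
  · exact sign_flip ▸ h₄ x hx (-v) (le_neg_input hv)

theorem stmt9 (w a : ℝ) (h : (0 < a ∧ 0 < w) ∨ (a < 0 ∧ w < 0)) :
    0 < tanh (w * a) ∧
    ((0 < a ∧ 0 < w) →
      (∀ x ∈ Set.Icc (-1 : ℝ) (-tanh (w * a)), ∀ v : ℝ, a / tanh (w * a) ≤ v →
        tanh (w * x * v) ≤ -tanh (w * a)) ∧
      (∀ x ∈ Set.Icc (-1 : ℝ) (-tanh (w * a)), ∀ v : ℝ, v ≤ -a / tanh (w * a) →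
        tanh (w * a) ≤ tanh (w * x * v)) ∧
      (∀ x ∈ Set.Icc (tanh (w * a)) 1, ∀ v : ℝ, a / tanh (w * a) ≤ v →
        tanh (w * a) ≤ tanh (w * x * v)) ∧
      (∀ x ∈ Set.Icc (tanh (w * a)) 1, ∀ v : ℝ, v ≤ -a / tanh (w * a) →
        tanh (w * x * v) ≤ -tanh (w * a)) ∧
      Disjoint (Set.Ici (a / tanh (w * a))) (Set.Iic (-a / tanh (w * a)))) ∧
    ((a < 0 ∧ w < 0) →
      (∀ x ∈ Set.Icc (-1 : ℝ) (-tanh (w * a)), ∀ v : ℝ, v ≤ a / tanh (w * a) →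
        tanh (w * x * v) ≤ -tanh (w * a)) ∧
      (∀ x ∈ Set.Icc (-1 : ℝ) (-tanh (w * a)), ∀ v : ℝ, -a / tanh (w * a) ≤ v →
        tanh (w * a) ≤ tanh (w * x * v)) ∧
      (∀ x ∈ Set.Icc (tanh (w * a)) 1, ∀ v : ℝ, v ≤ a / tanh (w * a) →
        tanh (w * a) ≤ tanh (w * x * v)) ∧
      (∀ x ∈ Set.Icc (tanh (w * a)) 1, ∀ v : ℝ, -a / tanh (w * a) ≤ v →
        tanh (w * x * v) ≤ -tanh (w * a)) ∧
      Disjoint (Set.Iic (a / tanh (w * a))) (Set.Ici (-a / tanh (w * a)))) ∧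
    -tanh (w * a) < tanh (w * a) ∧
    Disjoint (Set.Icc (-1 : ℝ) (-tanh (w * a))) (Set.Icc (tanh (w * a)) 1) := by
  have hwa : 0 < w * a := h.elim (fun ⟨ha, hw⟩ => mul_pos hw ha)
    fun ⟨ha, hw⟩ => mul_pos_of_neg_of_neg hw ha
  have ht := tanh_pos hwa
  refine ⟨ht, fun ⟨ha, hw⟩ => tanh_neuron_cyclic_of_pos hw ha,
    fun ⟨ha, hw⟩ => tanh_neuron_cyclic_of_neg hw ha, neg_lt_self ht, ?_⟩
  exact (Iic_disjoint_Ici.2 (neg_lt_self ht).not_ge).mono Icc_subset_Iic_self Icc_subset_Ici_self
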